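/- arXiv:1707.06512 — 7 statements merged into one kernel-verified Lean document; each statement's English description precedes it below -/
import Mathlib

section
/- Let J be a real symmetric N×N matrix with vanishing diagonal, κ ∈ ℝ^N, and let J(κ) = J + diag(κ). Suppose J(κ) is positive semidefinite and s is a real N×M matrix whose rows are unit vectors with J(κ)·s = 0. Then s is a ground state of the Heisenberg Hamiltonian defined by J: for every real N×M' matrix t whose rows are unit vectors, Tr(J·t·tᵀ) ≥ Tr(J·s·sᵀ). -/
/-! On spin configurations the energy of `J + diag κ` differs from that of `J` by the constant
`∑ κ`, since every Gram matrix `t tᵀ` has unit diagonal. The energy of the positive semidefinite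
`J + diag κ` is `Tr (tᵀ (J + diag κ) t) ≥ 0`, and it vanishes on `s` because `(J + diag κ) s = 0`.
Hence `s` minimises the energy of `J + diag κ`, and so that of `J`. -/

open Matrix

/-- A spin configuration: an `N × M` real matrix whose rows are unit vectors. -/
def IsSpinConfig {N M : ℕ} (s : Matrix (Fin N) (Fin M) ℝ) : Prop :=
  ∀ μ, ∑ i, s μ i * s μ i = 1

lemma Matrix.trace_diagonal_mul {n α : Type*} [Fintype n] [DecidableEq n]
    [NonUnitalNonAssocSemiring α] (d : n → α) (A : Matrix n n α) :
    (diagonal d * A).trace = ∑ i, d i * A i i := by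
  simp only [trace, diag, diagonal_mul]

lemma Matrix.PosSemidef.trace_mul_mul_transpose_nonneg {n m : Type*} [Fintype n] [Fintype m]
    {A : Matrix n n ℝ} (hA : A.PosSemidef) (t : Matrix n m ℝ) :
    0 ≤ (A * (t * tᵀ)).trace := by
  have hconj : (A * (t * tᵀ)).trace = (tᵀ * A * t).trace := by
    rw [← Matrix.mul_assoc, trace_mul_comm (A * t) tᵀ, Matrix.mul_assoc]
  rw [hconj]
  exact (hA.conjTranspose_mul_mul_same t).trace_nonneg

lemma IsSpinConfig.mul_transpose_self_apply_self {N M : ℕ} {t : Matrix (Fin N) (Fin M) ℝ}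
    (ht : IsSpinConfig t) (μ : Fin N) : (t * tᵀ) μ μ = 1 := by
  simpa only [mul_apply, transpose_apply] using ht μ

lemma IsSpinConfig.trace_add_diagonal_mul {N M : ℕ} {t : Matrix (Fin N) (Fin M) ℝ}
    (ht : IsSpinConfig t) (J : Matrix (Fin N) (Fin N) ℝ) (κ : Fin N → ℝ) :
    ((J + diagonal κ) * (t * tᵀ)).trace = (J * (t * tᵀ)).trace + ∑ μ, κ μ := by
  simp only [Matrix.add_mul, trace_add, trace_diagonal_mul, ht.mul_transpose_self_apply_self,
    mul_one]

theorem psd_dressed_annihilates_imp_groundState_general {N M : ℕ}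
    (J : Matrix (Fin N) (Fin N) ℝ)
    (κ : Fin N → ℝ)
    (hpsd : (J + Matrix.diagonal κ).PosSemidef)
    (s : Matrix (Fin N) (Fin M) ℝ) (hs : IsSpinConfig s)
    (hker : (J + Matrix.diagonal κ) * s = 0) :
    ∀ (M' : ℕ) (t : Matrix (Fin N) (Fin M') ℝ), IsSpinConfig t →
      (J * (t * tᵀ)).trace ≥ (J * (s * sᵀ)).trace := by
  intro M' t ht
  have hs_zero : ((J + diagonal κ) * (s * sᵀ)).trace = 0 := by
    rw [← Matrix.mul_assoc, hker, Matrix.zero_mul, trace_zero]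
  have ht_nonneg := hpsd.trace_mul_mul_transpose_nonneg t
  rw [hs.trace_add_diagonal_mul] at hs_zero
  rw [ht.trace_add_diagonal_mul] at ht_nonneg
  linarith

/-- If the dressed matrix `J(κ) = J + diag κ` is positive semidefinite and annihilates the
spin configuration `s`, then `s` is a ground state of the Heisenberg Hamiltonian of `J`. -/
theorem psd_dressed_annihilates_imp_groundState {N M : ℕ}
    (J : Matrix (Fin N) (Fin N) ℝ) (hsym : J.IsSymm) (hdiag : ∀ i, J i i = 0)
    (κ : Fin N → ℝ)
    (hpsd : (J + Matrix.diagonal κ).PosSemidef)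
    (s : Matrix (Fin N) (Fin M) ℝ) (hs : IsSpinConfig s)
    (hker : (J + Matrix.diagonal κ) * s = 0) :
    ∀ (M' : ℕ) (t : Matrix (Fin N) (Fin M') ℝ), IsSpinConfig t →
      (J * (t * tᵀ)).trace ≥ (J * (s * sᵀ)).trace :=
  psd_dressed_annihilates_imp_groundState_general J κ hpsd s hs hker
end

section
/- Let J be a real symmetric N×N matrix with vanishing diagonal and let λ ∈ ℝ^N satisfy Σ_μ λ_μ = 0. Then for every G in the Gram set 𝒢_N, Tr(J·G) ≥ N · j_min(λ), where j_min(λ) is the smallest eigenvalue of J(λ) = J + diag(λ). In particular the minimal Heisenberg energy E_min satisfies E_min ≥ N·j_min(λ) for every such λ. -/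
open Matrix

/-- The Gram set: real symmetric positive semidefinite `N × N` matrices with unit diagonal. -/
def GramSet (N : ℕ) : Set (Matrix (Fin N) (Fin N) ℝ) :=
  {G | G.PosSemidef ∧ ∀ i, G i i = 1}

/-- The smallest eigenvalue of a real square matrix (the infimum of its set of eigenvalues). -/
noncomputable def minEigenvalue {N : ℕ} (A : Matrix (Fin N) (Fin N) ℝ) : ℝ :=
  sInf {r : ℝ | ∃ x : Fin N → ℝ, x ≠ 0 ∧ A.mulVec x = r • x}

/-!
Write `A = J + diag λ` and `m = j_min(λ)`. Since `Σ λ_μ = 0` and `G` has unit diagonal,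
`Tr (diag λ ⬝ G) = Σ λ_μ = 0`, so `Tr (J G) = Tr (A G)`. Both `A - m ⬝ 1` and `G` are positive
semidefinite, and the trace of a product of two such matrices is nonnegative; hence
`Tr (A G) ≥ m ⬝ Tr G = m N`.
-/

open scoped MatrixOrder ComplexOrder

namespace Matrix

variable {n 𝕜 : Type*} [Fintype n]

theorem setOf_mulVec_eq_smul_eq_spectrum {K : Type*} [Field K] [DecidableEq n]
    (A : Matrix n n K) : {r : K | ∃ x : n → K, x ≠ 0 ∧ A *ᵥ x = r • x} = spectrum K A := by
  ext r
  rw [Set.mem_ofPred_eq, ← spectrum_toLin', ← Module.End.hasEigenvalue_iff_mem_spectrum]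
  constructor
  · rintro ⟨x, hx0, hAx⟩
    exact Module.End.hasEigenvalue_of_hasEigenvector
      ⟨Module.End.mem_eigenspace_iff.mpr (by rwa [toLin'_apply]), hx0⟩
  · intro h
    obtain ⟨x, hx, hx0⟩ := h.exists_hasEigenvector
    exact ⟨x, hx0, by simpa only [toLin'_apply] using Module.End.mem_eigenspace_iff.mp hx⟩

theorem PosSemidef.trace_mul_nonneg [RCLike 𝕜] {A B : Matrix n n 𝕜} (hA : A.PosSemidef)
    (hB : B.PosSemidef) : 0 ≤ (A * B).trace := by
  classical
  obtain ⟨X, rfl⟩ := CStarAlgebra.nonneg_iff_eq_star_mul_self.mp hB.nonneg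
  rw [← mul_assoc, trace_mul_cycle]
  exact (hA.mul_mul_conjTranspose_same X).trace_nonneg

theorem IsHermitian.mul_trace_le_trace_mul [RCLike 𝕜] [DecidableEq n] {A G : Matrix n n 𝕜}
    (hA : A.IsHermitian) (hG : G.PosSemidef) {m : ℝ} (hm : ∀ r ∈ spectrum ℝ A, m ≤ r) :
    (m : 𝕜) * G.trace ≤ (A * G).trace := by
  have hshift : (A - algebraMap ℝ _ m).PosSemidef :=
    le_iff.mp <| (algebraMap_le_iff_le_spectrum hA.isSelfAdjoint).mpr hm
  have := hshift.trace_mul_nonneg hG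
  rwa [sub_mul, trace_sub, Algebra.algebraMap_eq_smul_one, smul_one_mul, trace_smul,
    RCLike.real_smul_eq_coe_mul, sub_nonneg] at this

end Matrix

theorem minEigenvalue_le_of_mem_spectrum {N : ℕ} {A : Matrix (Fin N) (Fin N) ℝ} {r : ℝ}
    (hr : r ∈ spectrum ℝ A) : minEigenvalue A ≤ r := by
  rw [minEigenvalue, setOf_mulVec_eq_smul_eq_spectrum]
  exact csInf_le A.finite_spectrum.bddBelow hr

section GramSet

variable {N : ℕ} {G : Matrix (Fin N) (Fin N) ℝ}

theorem trace_eq_card_of_mem_gramSet (hG : G ∈ GramSet N) : G.trace = N := by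
  simp [trace, hG.2]

theorem trace_diagonal_mul_of_mem_gramSet (hG : G ∈ GramSet N) (d : Fin N → ℝ) :
    (diagonal d * G).trace = ∑ i, d i := by
  simp [trace, diagonal_mul, hG.2]

end GramSet

theorem trace_ge_card_mul_minEigenvalue_general {N : ℕ}
    (J : Matrix (Fin N) (Fin N) ℝ) (hsym : J.IsSymm)
    (lam : Fin N → ℝ) (hlam : ∑ i, lam i = 0)
    (G : Matrix (Fin N) (Fin N) ℝ) (hG : G ∈ GramSet N) :
    (J * G).trace ≥ (N : ℝ) * minEigenvalue (J + Matrix.diagonal lam) := by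
  have hA : (J + diagonal lam).IsHermitian :=
    isHermitian_iff_isSymm.mpr (hsym.add (isSymm_diagonal lam))
  calc (N : ℝ) * minEigenvalue (J + diagonal lam)
      = minEigenvalue (J + diagonal lam) * G.trace := by
        rw [trace_eq_card_of_mem_gramSet hG, mul_comm]
    _ ≤ ((J + diagonal lam) * G).trace :=
      hA.mul_trace_le_trace_mul hG.1 fun _ ↦ minEigenvalue_le_of_mem_spectrum
    _ = (J * G).trace := by
        rw [add_mul, trace_add, trace_diagonal_mul_of_mem_gramSet hG, hlam, add_zero]

/-- For `J` symmetric with vanishing diagonal and `λ` with zero sum,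
`Tr (J G) ≥ N ⬝ j_min(λ)` for every `G` in the Gram set. -/
theorem trace_ge_card_mul_minEigenvalue {N : ℕ} (hN : 0 < N)
    (J : Matrix (Fin N) (Fin N) ℝ) (hsym : J.IsSymm) (hdiag : ∀ i, J i i = 0)
    (lam : Fin N → ℝ) (hlam : ∑ i, lam i = 0)
    (G : Matrix (Fin N) (Fin N) ℝ) (hG : G ∈ GramSet N) :
    (J * G).trace ≥ (N : ℝ) * minEigenvalue (J + Matrix.diagonal lam) :=
  trace_ge_card_mul_minEigenvalue_general J hsym lam hlam G hG
end

section
/- Let J be a real symmetric N×N matrix with vanishing diagonal and let Λ = {λ ∈ ℝ^N : Σ_μ λ_μ = 0}. Then there exists a unique point λ̂ ∈ Λ at which the function λ ↦ j_min(λ) (the smallest eigenvalue of J(λ) = J + diag(λ)) attains its maximum over Λ; moreover, every ground state s of the Heisenberg Hamiltonian H(s) = Tr(J s sᵀ) satisfies J(λ̂)·s_i = j_min(λ̂)·s_i for every column s_i of s, i.e., all ground states live on the eigenspace of J(λ̂) corresponding to its minimal eigenvalue. -/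
open Matrix

/-- `s` is a ground state of the Heisenberg Hamiltonian `H(t) = Tr (J t tᵀ)`:
it is a spin configuration minimizing the energy over all spin configurations
of all dimensions. -/
def IsGroundState {N M : ℕ} (J : Matrix (Fin N) (Fin N) ℝ)
    (s : Matrix (Fin N) (Fin M) ℝ) : Prop :=
  IsSpinConfig s ∧ ∀ (M' : ℕ) (t : Matrix (Fin N) (Fin M') ℝ), IsSpinConfig t →
    (J * (t * tᵀ)).trace ≥ (J * (s * sᵀ)).trace

/-!
For every dressing `λ` with `∑ λ = 0` and every spin configuration `s`, the diagonal of `s sᵀ` is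
`1`, so `H(s) = Tr (J(λ) s sᵀ) ≥ N j_min(λ)`. As `J` has zero diagonal, `j_min(λ) ≤ min_μ λ_μ`,
so the continuous function `j_min` attains its maximum on the hyperplane at some `λ̂`. At `λ̂` the
constant vector `1/N` is a convex combination `∑ c_k x_k ∘ x_k` of squares of unit minimal
eigenvectors `x_k` of `J(λ̂)`: otherwise a separating functional yields a direction `δ` with
`∑ δ = 0` along which `j_min` increases. The columns `√(N c_k) x_k` form a spin configuration
attaining the bound `N j_min(λ̂)`, so the ground states are exactly the spin configurations with
all columns in that eigenspace. A ground state has no zero row, so `J(λ̂) s = j_min(λ̂) s`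
determines `λ̂`.
-/

theorem Matrix.mem_spectrum_iff_exists_mulVec_eq_smul {n K : Type*} [Fintype n] [DecidableEq n]
    [Field K] (A : Matrix n n K) (r : K) :
    r ∈ spectrum K A ↔ ∃ x, x ≠ 0 ∧ A *ᵥ x = r • x := by
  rw [← spectrum_toLin', ← Module.End.hasEigenvalue_iff_mem_spectrum,
    Module.End.hasEigenvalue_iff, Submodule.ne_bot_iff]
  simp [and_comm]

theorem minEigenvalue_eq_sInf_spectrum {N : ℕ} (A : Matrix (Fin N) (Fin N) ℝ) :
    minEigenvalue A = sInf (spectrum ℝ A) := by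
  rw [minEigenvalue]
  congr 1
  ext r
  exact (A.mem_spectrum_iff_exists_mulVec_eq_smul r).symm

theorem Matrix.dotProduct_diagonal_mulVec {n R : Type*} [Fintype n] [DecidableEq n]
    [CommSemiring R] (d x : n → R) : x ⬝ᵥ diagonal d *ᵥ x = d ⬝ᵥ (x * x) := by
  simp only [dotProduct, mulVec_diagonal, Pi.mul_apply]
  exact Finset.sum_congr rfl fun i _ => by ring

theorem Matrix.trace_mul_mul_transpose {n m R : Type*} [Fintype n] [Fintype m] [CommSemiring R]
    (A : Matrix n n R) (s : Matrix n m R) :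
    (A * (s * sᵀ)).trace = ∑ i, sᵀ i ⬝ᵥ A *ᵥ sᵀ i := by
  rw [← Matrix.mul_assoc, trace_mul_comm]
  simp [trace, mul_apply, dotProduct, mulVec, Finset.mul_sum]

theorem Matrix.trace_mul_transpose {n m R : Type*} [Fintype n] [Fintype m] [DecidableEq n]
    [CommSemiring R] (s : Matrix n m R) : (s * sᵀ).trace = ∑ i, sᵀ i ⬝ᵥ sᵀ i := by
  simpa using trace_mul_mul_transpose 1 s

theorem Matrix.trace_mul_mul_transpose_sub {n m R : Type*} [Fintype n] [Fintype m]
    [DecidableEq n] [CommRing R] (A : Matrix n n R) (s : Matrix n m R) (r : R) :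
    (A * (s * sᵀ)).trace - r * (s * sᵀ).trace =
      ∑ i, (sᵀ i ⬝ᵥ A *ᵥ sᵀ i - r * (sᵀ i ⬝ᵥ sᵀ i)) := by
  rw [trace_mul_mul_transpose, trace_mul_transpose, Finset.mul_sum, Finset.sum_sub_distrib]

theorem isCompact_setOf_dotProduct_self_eq_one {ι : Type*} [Fintype ι] :
    IsCompact {x : ι → ℝ | x ⬝ᵥ x = 1} := by
  refine (isCompact_Icc (a := -1) (b := 1)).of_isClosed_subset
    (isClosed_eq (by fun_prop) continuous_const) fun x (hx : x ⬝ᵥ x = 1) => ?_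
  have h : ∀ μ, |x μ| ≤ 1 := fun μ => abs_le_one_iff_mul_self_le_one.2 <|
    hx ▸ Finset.single_le_sum (f := fun i => x i * x i) (fun i _ => mul_self_nonneg _)
      (Finset.mem_univ μ)
  exact ⟨fun μ => (abs_le.1 (h μ)).1, fun μ => (abs_le.1 (h μ)).2⟩

theorem isCompact_convexHull {E : Type*} [NormedAddCommGroup E] [NormedSpace ℝ E]
    [FiniteDimensional ℝ E] {s : Set E} (hs : IsCompact s) : IsCompact (convexHull ℝ s) := by
  rcases s.eq_empty_or_nonempty with rfl | ⟨c, hc⟩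
  · simp
  set n := Module.finrank ℝ E + 1
  suffices convexHull ℝ s =
      (fun p : (Fin n → ℝ) × (Fin n → E) => ∑ i, p.1 i • p.2 i) ''
        (stdSimplex ℝ (Fin n) ×ˢ Set.univ.pi fun _ => s) by
    rw [this]
    exact ((isCompact_stdSimplex _ _).prod (isCompact_univ_pi fun _ => hs)).image (by fun_prop)
  refine subset_antisymm (fun x hx => ?_) ?_
  · obtain ⟨ι, _, z, w, hzs, hind, hw0, hw1, rfl⟩ := eq_pos_convex_span_of_mem_convexHull hx
    have hcard : Fintype.card ι ≤ n :=
      hind.card_le_finrank_succ.trans (Nat.add_le_add_right (Submodule.finrank_le _) 1)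
    -- pad the Carathéodory family to length `n` with copies of `c` of weight zero
    let e : ι ⊕ Fin (n - Fintype.card ι) ≃ Fin n :=
      Fintype.equivFinOfCardEq (by simp only [Fintype.card_sum, Fintype.card_fin]; omega)
    refine ⟨(Sum.elim w 0 ∘ e.symm, Sum.elim z (fun _ => c) ∘ e.symm),
      ⟨⟨fun k => ?_, ?_⟩, fun k _ => ?_⟩, ?_⟩
    · dsimp only [Function.comp_apply]
      rcases e.symm k with i | j
      exacts [(hw0 i).le, le_rfl]
    · simp [e.symm.sum_comp (Sum.elim w 0), hw1]
    · dsimp only [Function.comp_apply]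
      rcases e.symm k with i | j
      exacts [hzs (Set.mem_range_self i), hc]
    · simp [e.symm.sum_comp (fun j => Sum.elim w 0 j • Sum.elim z (fun _ => c) j)]
  · rintro _ ⟨p, ⟨hw, hz⟩, rfl⟩
    exact (convex_convexHull ℝ s).sum_mem (fun i _ => hw.1 i) hw.2
      fun i _ => subset_convexHull ℝ s (hz i trivial)

theorem exists_sum_eq_zero_and_dotProduct_pos {N : ℕ} (hN : 0 < N) {C : Set (Fin N → ℝ)}
    (hC : IsCompact C) (hsum : ∀ p ∈ C, ∑ μ, p μ = 1)
    (hu : (fun _ => (N : ℝ)⁻¹) ∉ convexHull ℝ C) :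
    ∃ δ : Fin N → ℝ, ∑ μ, δ μ = 0 ∧ ∀ p ∈ C, 0 < δ ⬝ᵥ p := by
  obtain ⟨φ, c, hφC, hφu⟩ := geometric_hahn_banach_closed_point (convex_convexHull ℝ C)
    (isCompact_convexHull hC).isClosed hu
  set g : Fin N → ℝ := fun μ => φ fun ν => if μ = ν then 1 else 0
  have hφ : ∀ p, φ p = p ⬝ᵥ g := fun p => by
    simpa [dotProduct] using LinearMap.pi_apply_eq_sum_univ φ.toLinearMap p
  refine ⟨fun μ => φ (fun _ => (N : ℝ)⁻¹) - g μ, ?_, fun p hp => ?_⟩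
  · have : (N : ℝ) ≠ 0 := by positivity
    simp [hφ, dotProduct, ← Finset.mul_sum, Finset.sum_sub_distrib, this]
  · have : (fun μ => φ (fun _ => (N : ℝ)⁻¹) - g μ) ⬝ᵥ p =
        φ (fun _ => (N : ℝ)⁻¹) * ∑ μ, p μ - φ p := by
      simp only [hφ p, dotProduct, sub_mul, Finset.sum_sub_distrib, Finset.mul_sum,
        mul_comm (g _)]
    rw [this, hsum p hp, mul_one, sub_pos]
    exact (hφC p (subset_convexHull ℝ C hp)).trans hφu

namespace Matrix.IsHermitian

variable {N M : ℕ} {A B : Matrix (Fin N) (Fin N) ℝ}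

theorem isLeast_minEigenvalue (hA : A.IsHermitian) (hN : 0 < N) :
    IsLeast (spectrum ℝ A) (minEigenvalue A) := by
  have hfin : (spectrum ℝ A).Finite := A.finite_real_spectrum
  have hne : (spectrum ℝ A).Nonempty := by
    rw [hA.spectrum_real_eq_range_eigenvalues]
    exact Set.range_nonempty_iff_nonempty.2 (Fin.pos_iff_nonempty.1 hN)
  rw [minEigenvalue_eq_sInf_spectrum]
  exact ⟨hne.csInf_mem hfin, fun r hr => csInf_le hfin.bddBelow hr⟩

theorem posSemidef_sub_minEigenvalue_smul_one (hA : A.IsHermitian) (hN : 0 < N) :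
    (A - minEigenvalue A • 1).PosSemidef := by
  refine posSemidef_iff_isHermitian_and_spectrum_nonneg.2
    ⟨hA.sub (isHermitian_one.smul (IsSelfAdjoint.all _)), fun a ha => ?_⟩
  obtain ⟨x, hx0, hx⟩ := (mem_spectrum_iff_exists_mulVec_eq_smul _ a).1 ha
  have : a + minEigenvalue A ∈ spectrum ℝ A := by
    refine (mem_spectrum_iff_exists_mulVec_eq_smul _ _).2 ⟨x, hx0, ?_⟩
    rw [sub_mulVec, smul_mulVec, one_mulVec, sub_eq_iff_eq_add] at hx
    rw [hx, add_smul]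
  simpa using (hA.isLeast_minEigenvalue hN).2 this

theorem minEigenvalue_mul_dotProduct_le (hA : A.IsHermitian) (hN : 0 < N) (x : Fin N → ℝ) :
    minEigenvalue A * (x ⬝ᵥ x) ≤ x ⬝ᵥ A *ᵥ x := by
  have := (hA.posSemidef_sub_minEigenvalue_smul_one hN).dotProduct_mulVec_nonneg x
  simp only [star_trivial, sub_mulVec, smul_mulVec, one_mulVec, dotProduct_sub,
    dotProduct_smul, smul_eq_mul] at this
  linarith

theorem dotProduct_mulVec_eq_minEigenvalue_mul_iff (hA : A.IsHermitian) (hN : 0 < N)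
    (x : Fin N → ℝ) :
    x ⬝ᵥ A *ᵥ x = minEigenvalue A * (x ⬝ᵥ x) ↔ A *ᵥ x = minEigenvalue A • x := by
  have := (hA.posSemidef_sub_minEigenvalue_smul_one hN).dotProduct_mulVec_zero_iff x
  simp only [star_trivial, sub_mulVec, smul_mulVec, one_mulVec, dotProduct_sub,
    dotProduct_smul, smul_eq_mul, sub_eq_zero] at this
  exact this

theorem exists_mulVec_eq_minEigenvalue_smul (hA : A.IsHermitian) (hN : 0 < N) :
    ∃ x : Fin N → ℝ, x ⬝ᵥ x = 1 ∧ A *ᵥ x = minEigenvalue A • x := by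
  obtain ⟨x, hx0, hx⟩ :=
    (mem_spectrum_iff_exists_mulVec_eq_smul _ _).1 (hA.isLeast_minEigenvalue hN).1
  have hpos : 0 < x ⬝ᵥ x := by simpa using dotProduct_star_self_pos_iff.2 hx0
  refine ⟨(√(x ⬝ᵥ x))⁻¹ • x, ?_, by rw [mulVec_smul, hx, smul_comm]⟩
  rw [smul_dotProduct, dotProduct_smul, smul_smul, smul_eq_mul, ← mul_inv,
    Real.mul_self_sqrt hpos.le, inv_mul_cancel₀ hpos.ne']

theorem minEigenvalue_le_apply_self (hA : A.IsHermitian) (hN : 0 < N) (μ : Fin N) :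
    minEigenvalue A ≤ A μ μ := by
  simpa using hA.minEigenvalue_mul_dotProduct_le hN (Pi.single μ 1)

theorem minEigenvalue_add_diagonal_le (hA : A.IsHermitian) (hN : 0 < N) {d : Fin N → ℝ}
    {r : ℝ} (hd : ∀ μ, d μ ≤ r) :
    minEigenvalue (A + diagonal d) ≤ minEigenvalue A + r := by
  obtain ⟨x, hx1, hx⟩ := hA.exists_mulVec_eq_minEigenvalue_smul hN
  have hdx : d ⬝ᵥ (x * x) ≤ r := by
    calc d ⬝ᵥ (x * x) ≤ (fun _ => r) ⬝ᵥ (x * x) :=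
          Finset.sum_le_sum fun μ _ => mul_le_mul_of_nonneg_right (hd μ) (mul_self_nonneg _)
      _ = r * (x ⬝ᵥ x) := by simp [dotProduct, Finset.mul_sum]
      _ = r := by rw [hx1, mul_one]
  have := (hA.add (isHermitian_diagonal d)).minEigenvalue_mul_dotProduct_le hN x
  rw [hx1, mul_one, add_mulVec, dotProduct_add, hx, dotProduct_smul, hx1, smul_eq_mul, mul_one,
    dotProduct_diagonal_mulVec] at this
  linarith

theorem exists_minEigenvalue_lt_add_smul (hA : A.IsHermitian) (hB : B.IsHermitian) (hN : 0 < N)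
    (hpos : ∀ x, x ⬝ᵥ x = 1 → A *ᵥ x = minEigenvalue A • x → 0 < x ⬝ᵥ B *ᵥ x) :
    ∃ t : ℝ, 0 < t ∧ minEigenvalue A < minEigenvalue (A + t • B) := by
  set m := minEigenvalue A
  have hAx : ∀ x : Fin N → ℝ, x ⬝ᵥ x = 1 → m ≤ x ⬝ᵥ A *ᵥ x := fun x hx1 => by
    simpa [hx1] using hA.minEigenvalue_mul_dotProduct_le hN x
  -- on the unit vectors where `B` is not positive, `A` stays uniformly above `m`
  set K := {x : Fin N → ℝ | x ⬝ᵥ x = 1} ∩ {x | x ⬝ᵥ B *ᵥ x ≤ 0}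
  have hK : IsCompact K :=
    isCompact_setOf_dotProduct_self_eq_one.inter_right (isClosed_le (by fun_prop) continuous_const)
  have hgt : ∀ x ∈ K, m < x ⬝ᵥ A *ᵥ x := by
    rintro x ⟨hx1 : x ⬝ᵥ x = 1, hxB : x ⬝ᵥ B *ᵥ x ≤ 0⟩
    refine (hAx x hx1).lt_of_ne fun heq => ?_
    have := hpos x hx1 ((hA.dotProduct_mulVec_eq_minEigenvalue_mul_iff hN x).1
      (by rw [hx1, mul_one]; exact heq.symm))
    linarith
  obtain ⟨η, hmη, hη⟩ := hK.exists_forall_le' (by fun_prop) hgt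
  set b := minEigenvalue B
  set t := (η - m) / (|b| + 1)
  have ht : 0 < t := div_pos (sub_pos.2 hmη) (by positivity)
  have htb : t * (|b| + 1) = η - m := div_mul_cancel₀ _ (by positivity)
  refine ⟨t, ht, ?_⟩
  obtain ⟨x, hx1, hx⟩ :=
    (hA.add (hB.smul (IsSelfAdjoint.all t))).exists_mulVec_eq_minEigenvalue_smul hN
  have hval : minEigenvalue (A + t • B) = x ⬝ᵥ A *ᵥ x + t * (x ⬝ᵥ B *ᵥ x) := by
    have := congrArg (x ⬝ᵥ ·) hx
    simp only [add_mulVec, smul_mulVec, dotProduct_add, dotProduct_smul, hx1, smul_eq_mul,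
      mul_one] at this
    exact this.symm
  rw [hval]
  rcases le_or_gt (x ⬝ᵥ B *ᵥ x) 0 with hxB | hxB
  · have hb : b ≤ x ⬝ᵥ B *ᵥ x := by
      simpa [hx1] using hB.minEigenvalue_mul_dotProduct_le hN x
    have := mul_le_mul_of_nonneg_left ((neg_abs_le b).trans hb) ht.le
    linarith [hη x ⟨hx1, hxB⟩]
  · linarith [mul_pos ht hxB, hAx x hx1]

theorem minEigenvalue_mul_trace_le (hA : A.IsHermitian) (hN : 0 < N)
    (s : Matrix (Fin N) (Fin M) ℝ) :
    minEigenvalue A * (s * sᵀ).trace ≤ (A * (s * sᵀ)).trace := by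
  have := Finset.sum_nonneg fun i (_ : i ∈ Finset.univ) =>
    sub_nonneg.2 (hA.minEigenvalue_mul_dotProduct_le hN (sᵀ i))
  rw [← trace_mul_mul_transpose_sub] at this
  linarith

theorem trace_mul_mul_transpose_eq_iff (hA : A.IsHermitian) (hN : 0 < N)
    (s : Matrix (Fin N) (Fin M) ℝ) :
    (A * (s * sᵀ)).trace = minEigenvalue A * (s * sᵀ).trace ↔
      ∀ i, A *ᵥ sᵀ i = minEigenvalue A • sᵀ i := by
  rw [← sub_eq_zero, trace_mul_mul_transpose_sub, Finset.sum_eq_zero_iff_of_nonneg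
    fun i _ => sub_nonneg.2 (hA.minEigenvalue_mul_dotProduct_le hN (sᵀ i))]
  simp only [Finset.mem_univ, true_imp_iff, sub_eq_zero,
    hA.dotProduct_mulVec_eq_minEigenvalue_mul_iff hN]

end Matrix.IsHermitian

namespace IsSpinConfig

variable {N M : ℕ} {s : Matrix (Fin N) (Fin M) ℝ}

theorem mul_transpose_apply_self (hs : IsSpinConfig s) (μ : Fin N) : (s * sᵀ) μ μ = 1 := by
  simpa [mul_apply] using hs μ

theorem trace_mul_transpose (hs : IsSpinConfig s) : (s * sᵀ).trace = N := by
  simp [trace, hs.mul_transpose_apply_self]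

theorem trace_add_diagonal_mul_s4 (hs : IsSpinConfig s) (J : Matrix (Fin N) (Fin N) ℝ)
    {lam : Fin N → ℝ} (hlam : ∑ i, lam i = 0) :
    ((J + diagonal lam) * (s * sᵀ)).trace = (J * (s * sᵀ)).trace := by
  simp [add_mul, trace, diagonal_mul, hs.mul_transpose_apply_self, Finset.sum_add_distrib, hlam]

theorem eq_of_mulVec_add_diagonal (hs : IsSpinConfig s) {J : Matrix (Fin N) (Fin N) ℝ}
    {a b : Fin N → ℝ} {r : ℝ} (ha : ∀ i, (J + diagonal a) *ᵥ sᵀ i = r • sᵀ i)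
    (hb : ∀ i, (J + diagonal b) *ᵥ sᵀ i = r • sᵀ i) : a = b := by
  funext μ
  obtain ⟨k, hk⟩ : ∃ k, s μ k ≠ 0 := by
    by_contra! h
    simpa [h] using hs μ
  have := congrFun ((ha k).trans (hb k).symm) μ
  simp [add_mulVec, mulVec_diagonal] at this
  exact this.resolve_right hk

end IsSpinConfig

theorem exists_isSpinConfig_of_const_mem_convexHull {N : ℕ} {V : Submodule ℝ (Fin N → ℝ)}
    {c : ℝ} (hc : 0 < c)
    (h : (fun _ => c) ∈ convexHull ℝ ((fun x => x * x) '' (V : Set (Fin N → ℝ)))) :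
    ∃ (M : ℕ) (s : Matrix (Fin N) (Fin M) ℝ), IsSpinConfig s ∧ ∀ i, sᵀ i ∈ V := by
  obtain ⟨ι, _, w, z, hw0, -, hz, hsum⟩ := mem_convexHull_iff_exists_fintype.1 h
  choose x hxV hxz using hz
  let e := Fintype.equivFin ι
  refine ⟨Fintype.card ι, of fun μ k => √(w (e.symm k) / c) * x (e.symm k) μ, fun μ => ?_,
    fun k => V.smul_mem √(w (e.symm k) / c) (hxV _)⟩
  have hw : ∀ i, 0 ≤ w i / c := fun i => div_nonneg (hw0 i) hc.le
  calc ∑ k, √(w (e.symm k) / c) * x (e.symm k) μ * (√(w (e.symm k) / c) * x (e.symm k) μ)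
      = ∑ i, w i / c * (x i μ * x i μ) := by
        rw [e.symm.sum_comp (fun i => √(w i / c) * x i μ * (√(w i / c) * x i μ))]
        exact Finset.sum_congr rfl fun i _ => by
          rw [mul_mul_mul_comm, Real.mul_self_sqrt (hw i)]
    _ = (∑ i, w i • z i) μ / c := by
        simp [Finset.sum_apply, Finset.sum_div, ← hxz]
        exact Finset.sum_congr rfl fun i _ => by ring
    _ = 1 := by rw [hsum, div_self hc.ne']

def IsOptimalDressing {N : ℕ} (J : Matrix (Fin N) (Fin N) ℝ) (lamh : Fin N → ℝ) : Prop :=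
  (∑ i, lamh i = 0) ∧ ∀ lam : Fin N → ℝ, (∑ i, lam i = 0) →
    minEigenvalue (J + diagonal lam) ≤ minEigenvalue (J + diagonal lamh)

section Dressing

variable {N : ℕ} {J : Matrix (Fin N) (Fin N) ℝ}

theorem continuous_minEigenvalue_add_diagonal (hJ : J.IsHermitian) (hN : 0 < N) :
    Continuous fun lam : Fin N → ℝ => minEigenvalue (J + diagonal lam) := by
  refine (LipschitzWith.of_le_add fun lam lam' => ?_).continuous
  have hd : ∀ μ, (lam - lam') μ ≤ dist lam lam' := fun μ =>
    (le_abs_self _).trans ((Real.dist_eq _ _).symm.le.trans (dist_le_pi_dist _ _ μ))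
  simpa [add_assoc, diagonal_add] using
    (hJ.add (isHermitian_diagonal lam')).minEigenvalue_add_diagonal_le hN hd

theorem exists_isOptimalDressing (hJ : J.IsHermitian) (hdiag : ∀ i, J i i = 0) (hN : 0 < N) :
    ∃ lamh, IsOptimalDressing J lamh := by
  have hle : ∀ lam μ, minEigenvalue (J + diagonal lam) ≤ lam μ := fun lam μ => by
    simpa [hdiag] using (hJ.add (isHermitian_diagonal lam)).minEigenvalue_le_apply_self hN μ
  set c := minEigenvalue (J + diagonal 0)
  -- only dressings with `c ≤ λ` can beat `λ = 0`, and with `∑ λ = 0` they form a compact set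
  set K := {lam : Fin N → ℝ | ∑ i, lam i = 0} ∩ Set.Ici (fun _ => c)
  have hK : IsCompact K := by
    refine (isCompact_Icc (a := fun _ => c) (b := fun _ => c - N * c)).of_isClosed_subset
      ((isClosed_eq (by fun_prop) continuous_const).inter isClosed_Ici) ?_
    rintro lam ⟨hsum : ∑ i, lam i = 0, hc⟩
    refine ⟨hc, fun μ => ?_⟩
    have := Finset.single_le_sum (f := fun i => lam i - c) (fun i _ => sub_nonneg.2 (hc i))
      (Finset.mem_univ μ)
    simp only [Finset.sum_sub_distrib, Finset.sum_const, Finset.card_univ, Fintype.card_fin,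
      nsmul_eq_mul] at this
    linarith
  have h0 : (0 : Fin N → ℝ) ∈ K := ⟨by simp, fun μ => hle 0 μ⟩
  obtain ⟨lamh, hlamh, hmax⟩ :=
    hK.exists_isMaxOn ⟨0, h0⟩ (continuous_minEigenvalue_add_diagonal hJ hN).continuousOn
  refine ⟨lamh, hlamh.1, fun lam hlam => ?_⟩
  by_cases hlamK : lam ∈ K
  · exact hmax hlamK
  · obtain ⟨μ, hμ⟩ : ∃ μ, lam μ < c := by simpa [K, hlam, Pi.le_def] using hlamK
    exact ((hle lam μ).trans hμ.le).trans (hmax h0)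

end Dressing

namespace IsOptimalDressing

variable {N : ℕ} {J : Matrix (Fin N) (Fin N) ℝ} {lamh : Fin N → ℝ}

theorem const_mem_convexHull (hJ : J.IsHermitian) (hN : 0 < N)
    (hopt : IsOptimalDressing J lamh) :
    (fun _ => (N : ℝ)⁻¹) ∈ convexHull ℝ ((fun x => x * x) '' {x | x ⬝ᵥ x = 1 ∧
      (J + diagonal lamh) *ᵥ x = minEigenvalue (J + diagonal lamh) • x}) := by
  set A := J + diagonal lamh
  set C :=
    (fun x : Fin N → ℝ => x * x) '' {x | x ⬝ᵥ x = 1 ∧ A *ᵥ x = minEigenvalue A • x}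
  have hC : IsCompact C :=
    (isCompact_setOf_dotProduct_self_eq_one.inter_right
      (isClosed_eq (by fun_prop) (by fun_prop))).image (by fun_prop)
  have hsumC : ∀ p ∈ C, ∑ μ, p μ = 1 := by
    rintro _ ⟨x, ⟨hx1, -⟩, rfl⟩
    simpa [dotProduct] using hx1
  by_contra hu
  -- moving the dressing along `δ` keeps `∑ λ = 0` and raises `j_min`
  obtain ⟨δ, hδsum, hδC⟩ := exists_sum_eq_zero_and_dotProduct_pos hN hC hsumC hu
  obtain ⟨t, ht, hlt⟩ := (hJ.add (isHermitian_diagonal lamh)).exists_minEigenvalue_lt_add_smul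
    (isHermitian_diagonal δ) hN fun x hx1 hx => by
      rw [dotProduct_diagonal_mulVec]
      exact hδC _ ⟨x, ⟨hx1, hx⟩, rfl⟩
  have := hopt.2 (lamh + t • δ)
    (by simp [Finset.sum_add_distrib, hopt.1, ← Finset.mul_sum, hδsum])
  rw [← diagonal_smul, add_assoc, diagonal_add] at hlt
  exact absurd this (not_le.2 hlt)

theorem exists_isSpinConfig (hJ : J.IsHermitian) (hN : 0 < N) (hopt : IsOptimalDressing J lamh) :
    ∃ (M : ℕ) (s : Matrix (Fin N) (Fin M) ℝ), IsSpinConfig s ∧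
      ∀ i, (J + diagonal lamh) *ᵥ sᵀ i = minEigenvalue (J + diagonal lamh) • sᵀ i := by
  set V := Module.End.eigenspace (toLin' (J + diagonal lamh)) (minEigenvalue (J + diagonal lamh))
  have hV : ∀ x, x ∈ V ↔
      (J + diagonal lamh) *ᵥ x = minEigenvalue (J + diagonal lamh) • x := fun x => by
    rw [Module.End.mem_eigenspace_iff, toLin'_apply]
  obtain ⟨M, s, hs, hsV⟩ := exists_isSpinConfig_of_const_mem_convexHull (V := V)
    (inv_pos.2 (Nat.cast_pos.2 hN)) <| convexHull_mono
      (Set.image_mono fun x hx => (hV x).2 hx.2) (hopt.const_mem_convexHull hJ hN)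
  exact ⟨M, s, hs, fun i => (hV _).1 (hsV i)⟩

theorem isGroundState_iff (hJ : J.IsHermitian) (hN : 0 < N) (hopt : IsOptimalDressing J lamh)
    {M : ℕ} {s : Matrix (Fin N) (Fin M) ℝ} (hs : IsSpinConfig s) :
    IsGroundState J s ↔
      ∀ i, (J + diagonal lamh) *ᵥ sᵀ i = minEigenvalue (J + diagonal lamh) • sᵀ i := by
  have hA := hJ.add (isHermitian_diagonal lamh)
  have henergy : ∀ {M'} {t : Matrix (Fin N) (Fin M') ℝ}, IsSpinConfig t →
      (J * (t * tᵀ)).trace = ((J + diagonal lamh) * (t * tᵀ)).trace ∧ (t * tᵀ).trace = N :=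
    fun ht => ⟨(ht.trace_add_diagonal_mul_s4 J hopt.1).symm, ht.trace_mul_transpose⟩
  have hlower : ∀ {M'} {t : Matrix (Fin N) (Fin M') ℝ}, IsSpinConfig t →
      minEigenvalue (J + diagonal lamh) * N ≤ (J * (t * tᵀ)).trace := fun ht => by
    rw [(henergy ht).1, ← (henergy ht).2]
    exact hA.minEigenvalue_mul_trace_le hN _
  rw [← hA.trace_mul_mul_transpose_eq_iff hN, ← (henergy hs).1, (henergy hs).2]
  refine ⟨fun hg => ?_, fun h => ⟨hs, fun _ t ht => h ▸ hlower ht⟩⟩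
  obtain ⟨M', s', hs', hcols⟩ := hopt.exists_isSpinConfig hJ hN
  have := (hA.trace_mul_mul_transpose_eq_iff hN s').2 hcols
  rw [← (henergy hs').1, (henergy hs').2] at this
  exact le_antisymm (this ▸ hg.2 _ s' hs') (hlower hs)

end IsOptimalDressing

/-- There is a unique `λ̂` with `∑ λ̂ = 0` maximizing `λ ↦ j_min(J + diag λ)`, and every
ground state of the Heisenberg Hamiltonian of `J` lives on the eigenspace of `J(λ̂)`
corresponding to the minimal eigenvalue `j_min(λ̂)`. -/
theorem existsUnique_maximizer_and_groundStates_on_min_eigenspace {N : ℕ} (hN : 0 < N)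
    (J : Matrix (Fin N) (Fin N) ℝ) (hsym : J.IsSymm) (hdiag : ∀ i, J i i = 0) :
    (∃! lamh : Fin N → ℝ, (∑ i, lamh i = 0) ∧
        ∀ lam : Fin N → ℝ, (∑ i, lam i = 0) →
          minEigenvalue (J + Matrix.diagonal lam) ≤ minEigenvalue (J + Matrix.diagonal lamh)) ∧
    (∀ lamh : Fin N → ℝ, ((∑ i, lamh i = 0) ∧
        ∀ lam : Fin N → ℝ, (∑ i, lam i = 0) →
          minEigenvalue (J + Matrix.diagonal lam) ≤ minEigenvalue (J + Matrix.diagonal lamh)) →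
      ∀ (M : ℕ) (s : Matrix (Fin N) (Fin M) ℝ), IsGroundState J s →
        ∀ i : Fin M, (J + Matrix.diagonal lamh).mulVec (fun μ => s μ i) =
          minEigenvalue (J + Matrix.diagonal lamh) • (fun μ => s μ i)) := by
  have hJ : J.IsHermitian := isHermitian_iff_isSymm.2 hsym
  have hground : ∀ lamh, IsOptimalDressing J lamh →
      ∀ (M : ℕ) (s : Matrix (Fin N) (Fin M) ℝ), IsGroundState J s →
        ∀ i, (J + diagonal lamh) *ᵥ sᵀ i = minEigenvalue (J + diagonal lamh) • sᵀ i :=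
    fun lamh hopt _ s hs => (hopt.isGroundState_iff hJ hN hs.1).1 hs
  obtain ⟨lamh, hopt⟩ := exists_isOptimalDressing hJ hdiag hN
  refine ⟨⟨lamh, hopt, fun lam hlam => ?_⟩, hground⟩
  obtain ⟨M, s, hs, hcols⟩ := hopt.exists_isSpinConfig hJ hN
  have heq : minEigenvalue (J + diagonal lam) = minEigenvalue (J + diagonal lamh) :=
    le_antisymm (hopt.2 lam hlam.1) (hlam.2 lamh hopt.1)
  exact hs.eq_of_mulVec_add_diagonal
    (fun i => heq ▸ hground lam hlam M s ((hopt.isGroundState_iff hJ hN hs).2 hcols) i) hcols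
end

section
/- Let N ≥ 2 and 0 ≤ k ≤ N. The barycenter B_k of the outer products v vᵀ over all sign vectors v ∈ {−1,1}^N with exactly k entries equal to −1 (there are binom(N,k) of them) lies on the line connecting the identity 1_N and the all-ones matrix A₀; precisely, B_k = (1 − 4k(N−k)/(N(N−1)))·A₀ + (4k(N−k)/(N(N−1)))·1_N. -/
/-!
Permuting the coordinates maps `k`-Ising vectors to `k`-Ising vectors, so the sum `∑ v vᵀ` over
them has a constant diagonal (equal to their number `#X`, as `vᵢ² = 1`) and, by transpositions
fixing a row index, a constant off-diagonal value `c`. Every `k`-Ising vector has coordinate sum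
`m = N - 2k`; summing row `i` of `∑ v vᵀ` gives `#X + (N - 1) c = m ∑_v vᵢ`, and summing
`∑_v vᵢ` (again constant in `i`) over `i` gives `N ∑_v vᵢ = #X m`. Hence
`N (N - 1) c = #X (m² - N)`, and `m² - N = N (N - 1) - 4k (N - k)`.
-/

open Matrix Finset

def IsPermInvariant {ι R : Type*} (X : Finset (ι → R)) : Prop :=
  ∀ π : Equiv.Perm ι, ∀ v ∈ X, v ∘ π ∈ X

namespace IsPermInvariant

theorem sum_comp {ι R M : Type*} [AddCommMonoid M] {X : Finset (ι → R)} (hX : IsPermInvariant X)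
    (π : Equiv.Perm ι) (g : (ι → R) → M) : ∑ v ∈ X, g (v ∘ π) = ∑ v ∈ X, g v :=
  sum_nbij' (· ∘ π) (· ∘ π.symm) (hX π) (hX π.symm) (fun v _ => by ext; simp)
    (fun v _ => by ext; simp) (fun _ _ => rfl)

section Ring

variable {ι R : Type*} [DecidableEq ι] {X : Finset (ι → R)}

theorem sum_apply_eq [AddCommMonoid R] (hX : IsPermInvariant X) (i j : ι) :
    ∑ v ∈ X, v j = ∑ v ∈ X, v i := by
  simpa using hX.sum_comp (Equiv.swap i j) (fun v => v i)

theorem sum_mul_apply_eq [Mul R] [AddCommMonoid R] (hX : IsPermInvariant X) {i j j' : ι}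
    (hj : i ≠ j) (hj' : i ≠ j') :
    ∑ v ∈ X, v i * v j' = ∑ v ∈ X, v i * v j := by
  simpa [Equiv.swap_apply_of_ne_of_ne hj hj'] using
    hX.sum_comp (Equiv.swap j j') (fun v => v i * v j)

variable [Fintype ι] [CommRing R] {m : R}

theorem card_mul_sum_apply (hX : IsPermInvariant X) (hm : ∀ v ∈ X, ∑ i, v i = m) (i : ι) :
    Fintype.card ι * ∑ v ∈ X, v i = #X * m :=
  calc (Fintype.card ι : R) * ∑ v ∈ X, v i = ∑ j, ∑ v ∈ X, v j := by
        simp [hX.sum_apply_eq i]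
    _ = ∑ v ∈ X, ∑ j, v j := sum_comm
    _ = #X * m := by simp [sum_congr rfl hm]

theorem sum_mul_apply_of_ne (hX : IsPermInvariant X) (hsq : ∀ v ∈ X, ∀ i, v i * v i = 1)
    (hm : ∀ v ∈ X, ∑ i, v i = m) {i j : ι} (hij : i ≠ j) :
    Fintype.card ι * (Fintype.card ι - 1) * ∑ v ∈ X, v i * v j =
      #X * (m ^ 2 - Fintype.card ι) := by
  have hrow : ∑ j', ∑ v ∈ X, v i * v j' = m * ∑ v ∈ X, v i :=
    calc ∑ j', ∑ v ∈ X, v i * v j' = ∑ v ∈ X, v i * ∑ j', v j' := by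
          simp only [sum_comm (s := univ), mul_sum]
      _ = m * ∑ v ∈ X, v i := by
          rw [mul_sum]; exact sum_congr rfl fun v hv => by rw [hm v hv, mul_comm]
  rw [← add_sum_erase _ _ (mem_univ i), sum_congr rfl fun v hv => hsq v hv i,
    sum_congr rfl fun j' hj' => hX.sum_mul_apply_eq hij (ne_of_mem_erase hj').symm, sum_const,
    sum_const, nsmul_eq_mul, nsmul_eq_mul, mul_one] at hrow
  have hcard : ((#(univ.erase i) : ℕ) : R) + 1 = Fintype.card ι := by
    rw [← Nat.cast_add_one, card_erase_add_one (mem_univ i), card_univ]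
  linear_combination (Fintype.card ι : R) * hrow + m * hX.card_mul_sum_apply hm i
    - (∑ v ∈ X, v i * v j) * (Fintype.card ι : R) * hcard

end Ring

variable {ι K : Type*} [Fintype ι] [DecidableEq ι] [Field K] {X : Finset (ι → K)} {m : K}

theorem barycenter_eq (hX : IsPermInvariant X) (hsq : ∀ v ∈ X, ∀ i, v i * v i = 1)
    (hm : ∀ v ∈ X, ∑ i, v i = m) (hX0 : (#X : K) ≠ 0)
    (hn : (Fintype.card ι : K) * (Fintype.card ι - 1) ≠ 0) :
    (1 / (#X : K)) • ∑ v ∈ X, vecMulVec v v =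
      ((m ^ 2 - Fintype.card ι) / (Fintype.card ι * (Fintype.card ι - 1))) •
          of (fun _ _ => (1 : K)) +
        ((Fintype.card ι ^ 2 - m ^ 2) / (Fintype.card ι * (Fintype.card ι - 1))) •
          (1 : Matrix ι ι K) := by
  obtain ⟨hn0, hn1⟩ := mul_ne_zero_iff.1 hn
  ext i j
  simp only [Matrix.smul_apply, Matrix.sum_apply, vecMulVec_apply, Matrix.add_apply, of_apply,
    one_apply, smul_eq_mul]
  rcases eq_or_ne i j with rfl | hij
  · rw [sum_congr rfl fun v hv => hsq v hv i, sum_const, nsmul_one, if_pos rfl]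
    field_simp
    ring
  · rw [if_neg hij]
    field_simp
    linear_combination hX.sum_mul_apply_of_ne hsq hm hij

end IsPermInvariant

section IsingVec

variable {ι R : Type*} [DecidableEq ι] [CommRing R]

def isingVec (S : Finset ι) : ι → R := fun i => if i ∈ S then -1 else 1

theorem isingVec_mul_self (S : Finset ι) (i : ι) : isingVec (R := R) S i * isingVec S i = 1 := by
  unfold isingVec; split_ifs <;> simp

theorem isingVec_comp_perm (S : Finset ι) (π : Equiv.Perm ι) :
    isingVec (R := R) S ∘ π = isingVec (S.map π.symm.toEmbedding) := by
  ext i; simp [isingVec]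

theorem isingVec_eq_neg_one_iff [NeZero (2 : R)] {S : Finset ι} {i : ι} :
    isingVec (R := R) S i = -1 ↔ i ∈ S := by
  by_cases h : i ∈ S
  · simp [isingVec, h]
  · simp only [isingVec, h, if_false, iff_false]
    intro h1
    exact two_ne_zero (α := R) (by linear_combination h1)

theorem isingVec_injective [NeZero (2 : R)] : Function.Injective (isingVec (ι := ι) (R := R)) :=
  fun S T h => by ext i; rw [← isingVec_eq_neg_one_iff (R := R), h, isingVec_eq_neg_one_iff]

variable [Fintype ι]

theorem sum_isingVec (S : Finset ι) : ∑ i, isingVec (R := R) S i = Fintype.card ι - 2 * #S := by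
  have hsplit : ∀ i, isingVec (R := R) S i = 1 - 2 * if i ∈ S then 1 else 0 := fun i => by
    unfold isingVec; split_ifs <;> ring
  simp only [hsplit, sum_sub_distrib, ← mul_sum, sum_boole]
  simp

variable [DecidableEq R]

def isingVecs (k : ℕ) : Finset (ι → R) := (powersetCard k univ).image isingVec

theorem isPermInvariant_isingVecs (k : ℕ) :
    IsPermInvariant (isingVecs (ι := ι) (R := R) k) := by
  intro π v hv
  obtain ⟨S, hS, rfl⟩ := mem_image.1 hv
  rw [isingVec_comp_perm]
  exact mem_image_of_mem _ (by simpa using hS)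

theorem card_isingVecs [NeZero (2 : R)] (k : ℕ) :
    #(isingVecs (ι := ι) (R := R) k) = (Fintype.card ι).choose k := by
  rw [isingVecs, card_image_of_injective _ isingVec_injective, card_powersetCard, card_univ]

theorem image_filter_card_eq_isingVecs [NeZero (2 : R)] (k : ℕ) :
    (univ.filter (fun σ : ι → ({-1, 1} : Finset R) =>
        #(univ.filter fun i => (σ i : R) = -1) = k)).image (fun σ i => (σ i : R)) =
      isingVecs k := by
  ext v
  simp only [isingVecs, mem_image, mem_filter, mem_univ, true_and, mem_powersetCard_univ]
  constructor
  · rintro ⟨σ, hσ, rfl⟩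
    refine ⟨_, hσ, funext fun i => ?_⟩
    by_cases h : (σ i : R) = -1
    · simp [isingVec, h]
    · have h1 : (σ i : R) = 1 := by
        simpa only [mem_insert, mem_singleton, h, false_or] using (σ i).2
      rw [isingVec, if_neg (by simpa using h), h1]
  · rintro ⟨S, hS, rfl⟩
    refine ⟨fun i => ⟨isingVec S i, by unfold isingVec; split_ifs <;> simp⟩, ?_, rfl⟩
    simpa [isingVec_eq_neg_one_iff] using hS

theorem sum_filter_card_eq_sum_isingVecs [NeZero (2 : R)] {M : Type*} [AddCommMonoid M] (k : ℕ)
    (g : (ι → R) → M) :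
    ∑ σ ∈ univ.filter (fun σ : ι → ({-1, 1} : Finset R) =>
        #(univ.filter fun i => (σ i : R) = -1) = k), g (fun i => (σ i : R)) =
      ∑ v ∈ isingVecs (R := R) k, g v := by
  rw [← image_filter_card_eq_isingVecs, sum_image]
  exact fun σ _ τ _ h => funext fun i => Subtype.ext (congrFun h i)

end IsingVec

theorem barycenter_isingVecs {ι K : Type*} [Fintype ι] [DecidableEq ι] [Field K] [CharZero K]
    [DecidableEq K] {k : ℕ} (hk : k ≤ Fintype.card ι) (hn : 2 ≤ Fintype.card ι) :
    (1 / ((Fintype.card ι).choose k : K)) • ∑ v ∈ isingVecs (R := K) k, vecMulVec v v =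
      ((((Fintype.card ι : K) - 2 * k) ^ 2 - Fintype.card ι) /
          (Fintype.card ι * (Fintype.card ι - 1))) • of (fun _ _ => (1 : K)) +
        (((Fintype.card ι : K) ^ 2 - (Fintype.card ι - 2 * k) ^ 2) /
          (Fintype.card ι * (Fintype.card ι - 1))) • (1 : Matrix ι ι K) := by
  rw [← card_isingVecs (R := K)]
  refine (isPermInvariant_isingVecs (R := K) k).barycenter_eq ?_ ?_ ?_ ?_
  · simp only [isingVecs, forall_mem_image]
    exact fun S _ => isingVec_mul_self S
  · simp only [isingVecs, forall_mem_image, mem_powersetCard_univ]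
    rintro S rfl
    exact sum_isingVec S
  · rw [card_isingVecs]
    exact_mod_cast (Nat.choose_pos hk).ne'
  · exact mul_ne_zero (Nat.cast_ne_zero.2 (by omega))
      (sub_ne_zero.2 (Nat.cast_ne_one.2 (by omega)))

/-- The barycenter of the Ising matrices `v vᵀ` over all sign vectors `v ∈ {−1,1}^N` with
exactly `k` entries equal to `−1` lies on the segment between the all-ones matrix `A₀`
and the identity `1_N`, with the stated coefficients. -/
theorem barycenter_k_ising (N k : ℕ) (hN : 2 ≤ N) (hk : k ≤ N) :
    ((1 : ℝ) / (N.choose k : ℝ)) •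
      ∑ σ ∈ Finset.univ.filter
          (fun σ : Fin N → ({-1, 1} : Finset ℝ) =>
            (Finset.univ.filter fun i => (σ i : ℝ) = -1).card = k),
        vecMulVec (fun i => (σ i : ℝ)) (fun i => (σ i : ℝ)) =
      (1 - 4 * (k : ℝ) * ((N : ℝ) - (k : ℝ)) / ((N : ℝ) * ((N : ℝ) - 1))) •
          Matrix.of (fun _ _ => (1 : ℝ)) +
        (4 * (k : ℝ) * ((N : ℝ) - (k : ℝ)) / ((N : ℝ) * ((N : ℝ) - 1))) •
          (1 : Matrix (Fin N) (Fin N) ℝ) := by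
  have key := barycenter_isingVecs (ι := Fin N) (K := ℝ) (by simpa using hk) (by simpa using hN)
  rw [← sum_filter_card_eq_sum_isingVecs] at key
  simp only [Fintype.card_fin] at key
  have hN0 : (N : ℝ) ≠ 0 := Nat.cast_ne_zero.2 (by omega)
  have hN1 : (N : ℝ) - 1 ≠ 0 := sub_ne_zero.2 (Nat.cast_ne_one.2 (by omega))
  convert key using 3 <;> field_simp <;> ring
end

section
/- The identity matrix 1_N is a fixed point of every affine bijection σ of the Gram set 𝒢_N onto itself: σ(1_N) = 1_N. -/
open Matrix

/-- `σ` is an affine bijection of the Gram set `𝒢_N` onto itself. -/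
def IsAffineBijOfGramSet (N : ℕ)
    (σ : Matrix (Fin N) (Fin N) ℝ → Matrix (Fin N) (Fin N) ℝ) : Prop :=
  Set.BijOn σ (GramSet N) (GramSet N) ∧
    ∀ G ∈ GramSet N, ∀ G' ∈ GramSet N, ∀ α : ℝ, 0 ≤ α → α ≤ 1 →
      σ (α • G + (1 - α) • G') = α • σ G + (1 - α) • σ G'

/-!
Put `α = (N - 1) / N` and call `p` an `α`-center of a set `S` when every `m ∈ S` can be written
as `p = α • h + (1 - α) • m` with `h ∈ S`. Affine bijections preserve `α`-centers. The identity
is an `α`-center of `𝒢_N`, because `N • 1 - G` is positive semidefinite for every `G ∈ 𝒢_N`.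
Conversely, if `G` is an `α`-center, writing `G = α • H_v + (1 - α) • v vᵀ` for each sign vector
`v` gives `vᵀ G v = α vᵀ H_v v + N ≥ N`, while the average of `vᵀ G v` over all sign vectors is
`trace G = N` (the identity is the barycenter of the Ising matrices). So `vᵀ H_v v = 0`, hence
`H_v v = 0` and `G v = v` for every sign vector, and these span `ℝ^N`.
-/

section CenterOfRatio

variable {E F : Type*} [AddCommGroup E] [Module ℝ E] [AddCommGroup F] [Module ℝ F]

def IsCenterOfRatio (S : Set E) (α : ℝ) (p : E) : Prop :=
  ∀ m ∈ S, ∃ h ∈ S, p = α • h + (1 - α) • m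

theorem IsCenterOfRatio.image {S : Set E} {T : Set F} {σ : E → F}
    (hmaps : Set.MapsTo σ S T) (hsurj : Set.SurjOn σ S T)
    (haff : ∀ x ∈ S, ∀ y ∈ S, ∀ α : ℝ, 0 ≤ α → α ≤ 1 →
      σ (α • x + (1 - α) • y) = α • σ x + (1 - α) • σ y)
    {α : ℝ} (hα₀ : 0 ≤ α) (hα₁ : α ≤ 1) {p : E} (hp : IsCenterOfRatio S α p) :
    IsCenterOfRatio T α (σ p) := by
  intro m' hm'
  obtain ⟨m, hm, rfl⟩ := hsurj hm'
  obtain ⟨h, hh, rfl⟩ := hp m hm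
  exact ⟨σ h, hmaps hh, haff h hh m hm α hα₀ hα₁⟩

end CenterOfRatio

theorem Matrix.PosSemidef.two_mul_apply_mul_le {n : Type*} [Fintype n] [DecidableEq n]
    {A : Matrix n n ℝ} (hA : A.PosSemidef) (k l : n) (a b : ℝ) :
    2 * (A k l * a * b) ≤ A k k * a ^ 2 + A l l * b ^ 2 := by
  have h := hA.dotProduct_mulVec_nonneg (Pi.single k a - Pi.single l b)
  have hsymm : A l k = A k l := hA.isHermitian.apply k l
  simp only [star_trivial, mulVec_sub, dotProduct_sub, sub_dotProduct, mulVec_single,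
    single_dotProduct, Pi.smul_apply, col_apply, op_smul_eq_mul] at h
  rw [hsymm] at h
  nlinarith [h]

section SignVectors

variable {N : ℕ}

-- Sign vectors are indexed by the group `Fin N → ℤˣ`, whose translations flip coordinates.
def signVec (s : Fin N → ℤˣ) : Fin N → ℝ := fun k => ((s k : ℤ) : ℝ)

theorem signVec_mul_self (s : Fin N → ℤˣ) (k : Fin N) : signVec s k * signVec s k = 1 := by
  simp only [signVec, ← Int.cast_mul, ← Units.val_mul, Int.units_mul_self, Units.val_one,
    Int.cast_one]

theorem signVec_dotProduct_self (s : Fin N → ℤˣ) : signVec s ⬝ᵥ signVec s = N := by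
  simp [dotProduct, signVec_mul_self]

theorem sum_signVec_mul_signVec_of_ne {k l : Fin N} (hkl : k ≠ l) :
    ∑ s : Fin N → ℤˣ, signVec s k * signVec s l = 0 := by
  have hflip : ∀ s, signVec (Pi.mulSingle k (-1) * s) k * signVec (Pi.mulSingle k (-1) * s) l =
      -(signVec s k * signVec s l) := fun s => by
    simp [signVec, Pi.mulSingle_eq_of_ne hkl.symm]
  have := Equiv.sum_comp (Equiv.mulLeft (Pi.mulSingle k (-1) : Fin N → ℤˣ))
    fun s => signVec s k * signVec s l
  simp only [Equiv.coe_mulLeft, hflip, Finset.sum_neg_distrib] at this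
  linarith

theorem sum_vecMulVec_signVec :
    ∑ s : Fin N → ℤˣ, vecMulVec (signVec s) (signVec s) = (2 ^ N : ℝ) • 1 := by
  ext k l
  rcases eq_or_ne k l with rfl | hkl
  · simp [Matrix.sum_apply, vecMulVec_apply, signVec_mul_self]
  · simp [Matrix.sum_apply, vecMulVec_apply, sum_signVec_mul_signVec_of_ne hkl, hkl]

theorem sum_signVec_dotProduct_mulVec (A : Matrix (Fin N) (Fin N) ℝ) :
    ∑ s : Fin N → ℤˣ, signVec s ⬝ᵥ A *ᵥ signVec s = 2 ^ N * A.trace := by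
  have htrace : ∀ s : Fin N → ℤˣ,
      signVec s ⬝ᵥ A *ᵥ signVec s = (A * vecMulVec (signVec s) (signVec s)).trace := fun s => by
    rw [mul_vecMulVec, trace_vecMulVec, dotProduct_comm]
  simp only [htrace, ← trace_sum, ← Matrix.mul_sum, sum_vecMulVec_signVec, mul_smul_comm, mul_one,
    trace_smul, smul_eq_mul]

theorem eq_one_of_mulVec_signVec {A : Matrix (Fin N) (Fin N) ℝ}
    (hA : ∀ s, A *ᵥ signVec s = signVec s) : A = 1 := by
  refine ext_of_mulVec_single fun j => ?_
  have hsingle :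
      Pi.single j (1 : ℝ) = (2⁻¹ : ℝ) • (signVec 1 - signVec (Pi.mulSingle j (-1))) := by
    ext i
    rcases eq_or_ne i j with rfl | hij
    · norm_num [signVec]
    · simp [signVec, hij]
  rw [one_mulVec, hsingle, mulVec_smul, mulVec_sub, hA, hA]

end SignVectors

namespace GramSet

variable {N : ℕ}

theorem one_mem : (1 : Matrix (Fin N) (Fin N) ℝ) ∈ GramSet N :=
  ⟨PosSemidef.one, one_apply_eq⟩

theorem eq_one_of_lt_two (hN : N < 2) {G : Matrix (Fin N) (Fin N) ℝ} (hG : G ∈ GramSet N) :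
    G = 1 := by
  ext i j
  obtain rfl : i = j := Fin.ext (by omega)
  rw [hG.2, one_apply_eq]

theorem dotProduct_mulVec_le {G : Matrix (Fin N) (Fin N) ℝ} (hG : G ∈ GramSet N)
    (x : Fin N → ℝ) : x ⬝ᵥ G *ᵥ x ≤ N * (x ⬝ᵥ x) := by
  calc x ⬝ᵥ G *ᵥ x = ∑ k, ∑ l, G k l * x k * x l := by
        simp only [dotProduct, mulVec, Finset.mul_sum]
        exact Finset.sum_congr rfl fun k _ => Finset.sum_congr rfl fun l _ => by ring
    _ ≤ ∑ k, ∑ l, (x k ^ 2 + x l ^ 2) / 2 := by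
        gcongr with k _ l _
        have := hG.1.two_mul_apply_mul_le k l (x k) (x l)
        rw [hG.2, hG.2] at this
        linarith
    _ = N * (x ⬝ᵥ x) := by
        simp only [add_div, Finset.sum_add_distrib, Finset.sum_const, Finset.card_univ,
          Fintype.card_fin, nsmul_eq_mul, ← Finset.mul_sum, dotProduct, ← sq]
        rw [← Finset.sum_div]
        ring

theorem posSemidef_natCast_smul_one_sub {G : Matrix (Fin N) (Fin N) ℝ} (hG : G ∈ GramSet N) :
    ((N : ℝ) • 1 - G).PosSemidef := by
  refine .of_dotProduct_mulVec_nonneg ((isHermitian_one.smul (.all _)).sub hG.1.isHermitian)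
    fun x => ?_
  have := dotProduct_mulVec_le hG x
  simp only [star_trivial, sub_mulVec, smul_mulVec, one_mulVec, dotProduct_sub, dotProduct_smul,
    smul_eq_mul]
  linarith

theorem isCenterOfRatio_one (hN : 2 ≤ N) :
    IsCenterOfRatio (GramSet N) ((N - 1) / N) (1 : Matrix (Fin N) (Fin N) ℝ) := by
  intro G hG
  have hN' : (1 : ℝ) < N := by exact_mod_cast hN
  have hN₀ : (N : ℝ) - 1 ≠ 0 := by linarith
  refine ⟨((N : ℝ) - 1)⁻¹ • ((N : ℝ) • 1 - G),
    ⟨(posSemidef_natCast_smul_one_sub hG).smul (by bound), fun i => ?_⟩, ?_⟩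
  · simp [hG.2, hN₀]
  · have hN₁ : (N : ℝ) ≠ 0 := by linarith
    have hcoeff : ((N : ℝ) - 1) / N * ((N : ℝ) - 1)⁻¹ = (N : ℝ)⁻¹ := by field_simp
    have hcoeff' : 1 - ((N : ℝ) - 1) / N = (N : ℝ)⁻¹ := by field_simp; ring
    rw [smul_smul, hcoeff, hcoeff', ← smul_add, sub_add_cancel, smul_smul, inv_mul_cancel₀ hN₁,
      one_smul]

theorem vecMulVec_signVec_mem (s : Fin N → ℤˣ) : vecMulVec (signVec s) (signVec s) ∈ GramSet N :=
  ⟨by simpa using posSemidef_vecMulVec_self_star (signVec s), fun i => by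
    simp [vecMulVec_apply, signVec_mul_self]⟩

theorem eq_one_of_isCenterOfRatio (hN : 2 ≤ N) {G : Matrix (Fin N) (Fin N) ℝ}
    (hG : G ∈ GramSet N) (hc : IsCenterOfRatio (GramSet N) ((N - 1) / N) G) : G = 1 := by
  set α : ℝ := (N - 1) / N with hα
  choose H hH hGH using fun s : Fin N → ℤˣ => hc _ (vecMulVec_signVec_mem s)
  have hN' : (1 : ℝ) < N := by exact_mod_cast hN
  have hα₀ : 0 < α := by rw [hα]; exact div_pos (by linarith) (by linarith)
  have hα₁ : (1 - α) * N = 1 := by rw [hα]; field_simp; ring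
  have hquad : ∀ s, signVec s ⬝ᵥ G *ᵥ signVec s = α * (signVec s ⬝ᵥ H s *ᵥ signVec s) + N := by
    intro s
    rw [hGH s, add_mulVec, smul_mulVec, smul_mulVec, vecMulVec_mulVec]
    simp only [dotProduct_add, dotProduct_smul, smul_eq_mul, op_smul_eq_mul,
      signVec_dotProduct_self]
    linear_combination (N : ℝ) * hα₁
  have hnonneg : ∀ s, 0 ≤ α * (signVec s ⬝ᵥ H s *ᵥ signVec s) := fun s =>
    mul_nonneg hα₀.le (by simpa using (hH s).1.dotProduct_mulVec_nonneg (signVec s))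
  have hsum : ∑ s, α * (signVec s ⬝ᵥ H s *ᵥ signVec s) = 0 := by
    have := sum_signVec_dotProduct_mulVec G
    have htrace : G.trace = N := by simp [trace, hG.2]
    simp only [hquad, Finset.sum_add_distrib, htrace, Finset.sum_const, Finset.card_univ,
      Fintype.card_fun, Fintype.card_units_int, Fintype.card_fin, nsmul_eq_mul] at this
    push_cast at this
    linarith
  have hzero : ∀ s, H s *ᵥ signVec s = 0 := fun s => by
    have := (Finset.sum_eq_zero_iff_of_nonneg fun s _ => hnonneg s).1 hsum s (Finset.mem_univ s)
    rw [← (hH s).1.dotProduct_mulVec_zero_iff, star_trivial]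
    exact (mul_eq_zero.1 this).resolve_left hα₀.ne'
  refine eq_one_of_mulVec_signVec fun s => ?_
  rw [hGH s, add_mulVec, smul_mulVec, smul_mulVec, hzero, vecMulVec_mulVec,
    signVec_dotProduct_self, smul_zero, zero_add, op_smul_eq_smul, smul_smul, hα₁, one_smul]

end GramSet

/-- The identity matrix is a fixed point of every affine bijection of the Gram set. -/
theorem affineBij_fixes_id (N : ℕ)
    (σ : Matrix (Fin N) (Fin N) ℝ → Matrix (Fin N) (Fin N) ℝ)
    (hσ : IsAffineBijOfGramSet N σ) :
    σ (1 : Matrix (Fin N) (Fin N) ℝ) = 1 := by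
  obtain ⟨hbij, haff⟩ := hσ
  have hσ₁ : σ 1 ∈ GramSet N := hbij.mapsTo GramSet.one_mem
  rcases lt_or_ge N 2 with hN | hN
  · exact GramSet.eq_one_of_lt_two hN hσ₁
  have hN' : (1 : ℝ) ≤ N := by exact_mod_cast (by omega : 1 ≤ N)
  have hα₀ : 0 ≤ ((N : ℝ) - 1) / N := div_nonneg (by linarith) (by linarith)
  have hα₁ : ((N : ℝ) - 1) / N ≤ 1 := div_le_one_of_le₀ (by linarith) (by linarith)
  exact GramSet.eq_one_of_isCenterOfRatio hN hσ₁
    ((GramSet.isCenterOfRatio_one hN).image hbij.mapsTo hbij.surjOn haff hα₀ hα₁)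
end

section
/- For N ≥ 2, the real linear span of the set {v vᵀ − 1_N : v ∈ {−1,1}^N a sign vector} equals the space of all real symmetric N×N matrices with vanishing diagonal; in particular this span has dimension N(N−1)/2. -/
/-!
Each `v vᵀ - 1` is symmetric with zero diagonal because `vᵢ² = 1`. Conversely, polarizing the
quadratic map `v ↦ v vᵀ` at the sign vectors `1`, `1 - 2eᵢ`, `1 - 2eⱼ`, `1 - 2eᵢ - 2eⱼ` gives
`4 (Eᵢⱼ + Eⱼᵢ)` for `i ≠ j`, and a symmetric `A` with zero diagonal satisfies
`2A = ∑_{i ≠ j} Aᵢⱼ (Eᵢⱼ + Eⱼᵢ)`. Such an `A` is determined by its `N(N-1)/2` strictly upper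
triangular entries.
-/

open Matrix

namespace Matrix

variable {R K n : Type*}

section Hollow

variable (R n) [Semiring R]

def hollowSymmetric : Submodule R (Matrix n n R) where
  carrier := {A | A.IsSymm ∧ ∀ i, A i i = 0}
  add_mem' {A B} hA hB := ⟨hA.1.add hB.1, fun i => by simp [hA.2 i, hB.2 i]⟩
  zero_mem' := ⟨isSymm_zero, fun _ => rfl⟩
  smul_mem' c A hA := ⟨hA.1.smul c, fun i => by simp [hA.2 i]⟩

variable {R n} [LinearOrder n]

def ofStrictUpper (g : {p : n × n // p.1 < p.2} → R) : Matrix n n R :=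
  of fun k l => if h : k < l then g ⟨(k, l), h⟩ else 0

theorem ofStrictUpper_add_transpose_mem (g : {p : n × n // p.1 < p.2} → R) :
    ofStrictUpper g + (ofStrictUpper g)ᵀ ∈ hollowSymmetric R n :=
  ⟨isSymm_add_transpose_self _, fun i => by simp [ofStrictUpper]⟩

variable (R n)

def hollowSymmetricEquiv : hollowSymmetric R n ≃ₗ[R] ({p : n × n // p.1 < p.2} → R) where
  toFun A p := A.1 p.1.1 p.1.2
  map_add' _ _ := rfl
  map_smul' _ _ := rfl
  invFun g := ⟨ofStrictUpper g + (ofStrictUpper g)ᵀ, ofStrictUpper_add_transpose_mem g⟩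
  left_inv := by
    rintro ⟨A, hA, hA0⟩
    ext k l
    rcases lt_trichotomy k l with h | rfl | h
    · simp [ofStrictUpper, h, h.not_gt]
    · simp [ofStrictUpper, hA0]
    · simp [ofStrictUpper, h, h.not_gt, hA.apply]
  right_inv g := by
    ext ⟨⟨k, l⟩, h⟩
    simp [ofStrictUpper, h, h.not_gt]

end Hollow

theorem finrank_hollowSymmetric [Ring R] [StrongRankCondition R] [Fintype n] [LinearOrder n] :
    Module.finrank R (hollowSymmetric R n) = (Fintype.card n).choose 2 := by
  rw [(hollowSymmetricEquiv R n).finrank_eq, Module.finrank_fintype_fun_eq_card,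
    Fintype.card_subtype, Fintype.card_product_filter_lt]

theorem two_smul_eq_sum_single_add_single [Semiring R] [Fintype n] [DecidableEq n]
    {A : Matrix n n R} (hA : A.IsSymm) :
    (2 : R) • A = ∑ i, ∑ j, A i j • (single i j 1 + single j i 1) := by
  calc (2 : R) • A = A + Aᵀ := by rw [two_smul, hA.eq]
    _ = ∑ i, ∑ j, (single i j (A i j) + single j i (A i j)) := by
      conv_lhs => rw [matrix_eq_sum_single A]
      simp only [transpose_sum, transpose_single, ← Finset.sum_add_distrib]
    _ = ∑ i, ∑ j, A i j • (single i j 1 + single j i 1) := by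
      simp only [smul_add, smul_single, smul_eq_mul, mul_one]

theorem vecMulVec_polarization [Ring R] (c a b : n → R) :
    vecMulVec (c + a + b) (c + a + b) - vecMulVec (c + a) (c + a) - vecMulVec (c + b) (c + b)
      + vecMulVec c c = vecMulVec a b + vecMulVec b a := by
  simp only [add_vecMulVec, vecMulVec_add]
  abel

def IsSignVector [Ring K] (v : n → K) : Prop := ∀ i, v i = 1 ∨ v i = -1

theorem isSignVector_one [Ring K] : IsSignVector (1 : n → K) := fun _ => Or.inl rfl

theorem IsSignVector.add_single_neg_two [Ring K] [DecidableEq n] {v : n → K}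
    (hv : IsSignVector v) {i : n} (hi : v i = 1) : IsSignVector (v + Pi.single i (-2)) := by
  intro k
  rcases eq_or_ne k i with rfl | hk
  · right; rw [Pi.add_apply, hi, Pi.single_eq_same]; norm_num
  · simpa [hk] using hv k

variable (K n) in
def centeredIsing [Ring K] [DecidableEq n] : Set (Matrix n n K) :=
  {A | ∃ v : n → K, IsSignVector v ∧ A = vecMulVec v v - 1}

theorem centeredIsing_subset_hollowSymmetric [CommRing K] [DecidableEq n] :
    centeredIsing K n ⊆ hollowSymmetric K n := by
  rintro _ ⟨v, hv, rfl⟩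
  refine ⟨IsSymm.sub (transpose_vecMulVec v v) isSymm_one, fun i => ?_⟩
  rcases hv i with h | h <;> simp [vecMulVec_apply, h]

theorem vecMulVec_single_single [MulZeroClass K] [DecidableEq n] (i j : n) (a b : K) :
    vecMulVec (Pi.single i a) (Pi.single j b) = single i j (a * b) := by
  ext k l
  simp only [vecMulVec_apply, single_apply, Pi.single_apply]
  rcases eq_or_ne k i with rfl | hk <;> rcases eq_or_ne l j with rfl | hl <;>
    simp [*, Ne.symm]

theorem four_smul_single_add_single_mem_span_centeredIsing [CommRing K] [DecidableEq n]
    {i j : n} (hij : i ≠ j) :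
    (4 : K) • (single i j 1 + single j i 1) ∈ Submodule.span K (centeredIsing K n) := by
  have mem (v : n → K) (hv : IsSignVector v) :
      vecMulVec v v - 1 ∈ Submodule.span K (centeredIsing K n) :=
    Submodule.subset_span ⟨v, hv, rfl⟩
  have sign_one : IsSignVector (1 : n → K) := isSignVector_one
  have flip_i := sign_one.add_single_neg_two (i := i) rfl
  have flip_j := sign_one.add_single_neg_two (i := j) rfl
  have flip_ij := flip_i.add_single_neg_two (i := j) (by simp [hij.symm])
  have key := vecMulVec_polarization (1 : n → K) (Pi.single i (-2)) (Pi.single j (-2))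
  rw [vecMulVec_single_single, vecMulVec_single_single] at key
  have four : (4 : K) • (single i j 1 + single j i 1 : Matrix n n K) =
      single i j ((-2 : K) * -2) + single j i (-2 * -2) := by
    rw [smul_add, smul_single, smul_single]; norm_num
  rw [four, ← key]
  convert add_mem (sub_mem (sub_mem (mem _ flip_ij) (mem _ flip_i)) (mem _ flip_j))
    (mem _ sign_one) using 1
  abel

theorem hollowSymmetric_le_span_centeredIsing [Field K] [NeZero (2 : K)] [Fintype n]
    [DecidableEq n] : hollowSymmetric K n ≤ Submodule.span K (centeredIsing K n) := by
  rintro A ⟨hA, hA0⟩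
  have h2 : (2 : K) ≠ 0 := NeZero.ne 2
  have h4 : (4 : K) ≠ 0 := by
    rw [show (4 : K) = 2 * 2 by norm_num]; exact mul_ne_zero h2 h2
  rw [← Submodule.smul_mem_iff _ h2, two_smul_eq_sum_single_add_single hA]
  refine Submodule.sum_mem _ fun i _ => Submodule.sum_mem _ fun j _ => ?_
  rcases eq_or_ne i j with rfl | hij
  · simp [hA0]
  · exact Submodule.smul_mem _ _ ((Submodule.smul_mem_iff _ h4).1
      (four_smul_single_add_single_mem_span_centeredIsing hij))

theorem span_centeredIsing [Field K] [NeZero (2 : K)] [Fintype n] [DecidableEq n] :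
    Submodule.span K (centeredIsing K n) = hollowSymmetric K n :=
  le_antisymm (Submodule.span_le.2 centeredIsing_subset_hollowSymmetric)
    hollowSymmetric_le_span_centeredIsing

end Matrix

theorem span_centered_ising_general (N : ℕ) :
    (Submodule.span ℝ
        {A : Matrix (Fin N) (Fin N) ℝ |
          ∃ v : Fin N → ℝ, (∀ i, v i = 1 ∨ v i = -1) ∧ A = vecMulVec v v - 1} : 
        Set (Matrix (Fin N) (Fin N) ℝ)) =
      {A : Matrix (Fin N) (Fin N) ℝ | A.IsSymm ∧ ∀ i, A i i = 0} ∧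
    Module.finrank ℝ
        (Submodule.span ℝ
          {A : Matrix (Fin N) (Fin N) ℝ |
            ∃ v : Fin N → ℝ, (∀ i, v i = 1 ∨ v i = -1) ∧ A = vecMulVec v v - 1}) =
      N * (N - 1) / 2 := by
  have hspan : Submodule.span ℝ (centeredIsing ℝ (Fin N)) = hollowSymmetric ℝ (Fin N) :=
    span_centeredIsing
  refine ⟨congrArg SetLike.coe hspan, ?_⟩
  change Module.finrank ℝ (Submodule.span ℝ (centeredIsing ℝ (Fin N))) = _
  rw [hspan, finrank_hollowSymmetric, Fintype.card_fin, Nat.choose_two_right]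

/-- For `N ≥ 2`, the linear span of the centered Ising matrices `v vᵀ − 1_N` (over sign
vectors `v ∈ {−1,1}^N`) is the space of symmetric matrices with vanishing diagonal,
whose dimension is `N(N−1)/2`. -/
theorem span_centered_ising (N : ℕ) (hN : 2 ≤ N) :
    (Submodule.span ℝ
        {A : Matrix (Fin N) (Fin N) ℝ |
          ∃ v : Fin N → ℝ, (∀ i, v i = 1 ∨ v i = -1) ∧ A = vecMulVec v v - 1} : 
        Set (Matrix (Fin N) (Fin N) ℝ)) =
      {A : Matrix (Fin N) (Fin N) ℝ | A.IsSymm ∧ ∀ i, A i i = 0} ∧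
    Module.finrank ℝ
        (Submodule.span ℝ
          {A : Matrix (Fin N) (Fin N) ℝ |
            ∃ v : Fin N → ℝ, (∀ i, v i = 1 ∨ v i = -1) ∧ A = vecMulVec v v - 1}) =
      N * (N - 1) / 2 :=
  span_centered_ising_general N
end

section
/- Let J₁, J₂, J₃ ∈ ℝ satisfy J₁ + J₂ + J₃ ≤ −√(J₁² + J₂² + J₃²). Then the ferromagnetic Ising state ↑↑↑ is a ground state of the spin triangle: for all u, v, w ∈ ℝ with u², v², w² ≤ 1 and 1 + 2uvw − (u²+v²+w²) ≥ 0, one has J₃·u + J₂·v + J₁·w ≥ J₁ + J₂ + J₃. Equivalently, the affine functional G ↦ Tr(𝕁 G) on the Gram set 𝒢₃ attains its minimum at the all-ones matrix. -/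
lemma key_gram (a b u v w : ℝ)
    (hu1 : u ≤ 1) (hv1 : v ≤ 1) (hw1 : w ≤ 1)
    (hG : 1 + 2 * u * v * w - (u ^ 2 + v ^ 2 + w ^ 2) ≥ 0) :
    a ^ 2 * (1 - v) + b ^ 2 * (1 - u) + a * b * (1 + w - u - v) ≥ 0 := by
  have h4 : 4 * (1 - u) * (1 - v) - (1 + w - u - v) ^ 2 ≥ 0 := by
    nlinarith [mul_nonneg (mul_nonneg (by linarith : (0:ℝ) ≤ 1 - u) (by linarith : (0:ℝ) ≤ 1 - v)) (by linarith : (0:ℝ) ≤ 1 - w)]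
  have hX : a ^ 2 * (1 - v) + b ^ 2 * (1 - u) ≥ 0 := by
    have := mul_nonneg (sq_nonneg a) (by linarith : (0:ℝ) ≤ 1 - v)
    have := mul_nonneg (sq_nonneg b) (by linarith : (0:ℝ) ≤ 1 - u)
    linarith
  nlinarith [sq_nonneg (a ^ 2 * (1 - v) - b ^ 2 * (1 - u)),
    mul_nonneg (mul_nonneg (sq_nonneg a) (sq_nonneg b)) h4,
    hX, sq_nonneg (a * b)]

lemma two_pos_absurd (A B C : ℝ) (hA : 0 < A) (hB : 0 < B)
    (hS : A + B + C ≤ 0) (hQ : A * B + A * C + B * C ≥ 0) : False := by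
  nlinarith [mul_pos hA hB, sq_nonneg (A + B), mul_nonneg (mul_pos hA hB).le (neg_nonneg.2 hS),
    mul_nonneg (by nlinarith : (0:ℝ) ≤ A + B) (by linarith : (0:ℝ) ≤ -(A + B + C))]

/-- If `J₁ + J₂ + J₃ ≤ −√(J₁² + J₂² + J₃²)` then the ferromagnetic Ising state `↑↑↑` is a
ground state of the spin triangle: the energy `J₃u + J₂v + J₁w` over the Gram set `𝒢₃`
is minimized at `u = v = w = 1`. -/
theorem ferromagnetic_cone_ground_state (J₁ J₂ J₃ : ℝ)
    (hJ : J₁ + J₂ + J₃ ≤ -Real.sqrt (J₁ ^ 2 + J₂ ^ 2 + J₃ ^ 2)) :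
    ∀ u v w : ℝ, u ^ 2 ≤ 1 → v ^ 2 ≤ 1 → w ^ 2 ≤ 1 →
      1 + 2 * u * v * w - (u ^ 2 + v ^ 2 + w ^ 2) ≥ 0 →
      J₃ * u + J₂ * v + J₁ * w ≥ J₁ + J₂ + J₃ := by
  have hX0 : (0:ℝ) ≤ J₁ ^ 2 + J₂ ^ 2 + J₃ ^ 2 := by positivity
  have hsq := Real.sq_sqrt hX0
  have hs0 := Real.sqrt_nonneg (J₁ ^ 2 + J₂ ^ 2 + J₃ ^ 2)
  have hS : J₁ + J₂ + J₃ ≤ 0 := by linarith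
  have hQ : J₁ * J₂ + J₁ * J₃ + J₂ * J₃ ≥ 0 := by nlinarith [hJ, hsq, hs0]
  clear hJ hsq hs0 hX0
  intro u v w hu hv hw hG
  have hu1 : u ≤ 1 := by nlinarith
  have hv1 : v ≤ 1 := by nlinarith
  have hw1 : w ≤ 1 := by nlinarith
  rcases le_or_gt J₁ 0 with h1 | h1
  · rcases le_or_gt J₂ 0 with h2 | h2
    · rcases le_or_gt J₃ 0 with h3 | h3
      · nlinarith [mul_nonneg (by linarith : (0:ℝ) ≤ -J₁) (by linarith : (0:ℝ) ≤ 1 - w),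
          mul_nonneg (by linarith : (0:ℝ) ≤ -J₂) (by linarith : (0:ℝ) ≤ 1 - v),
          mul_nonneg (by linarith : (0:ℝ) ≤ -J₃) (by linarith : (0:ℝ) ≤ 1 - u)]
      · -- J₃ > 0, J₁ ≤ 0, J₂ ≤ 0
        have hpos : (0:ℝ) < -J₂ + -J₁ := by nlinarith
        have K := key_gram (-J₂) (-J₁) w v u hw1 hv1 hu1 (by nlinarith)
        have hQu := mul_nonneg hQ (by linarith : (0:ℝ) ≤ 1 - u)
        have hprod : (-J₂ + -J₁) * (J₃ * u + J₂ * v + J₁ * w - (J₁ + J₂ + J₃)) ≥ 0 := by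
          linarith [K, hQu]
        nlinarith [hprod, hpos]
    · have h3 : J₃ ≤ 0 := by
        by_contra h3; push_neg at h3
        exact two_pos_absurd J₂ J₃ J₁ h2 h3 (by linarith) (by nlinarith)
      -- J₂ > 0, J₁ ≤ 0, J₃ ≤ 0
      have hpos : (0:ℝ) < -J₃ + -J₁ := by linarith
      have K := key_gram (-J₃) (-J₁) w u v hw1 hu1 hv1 (by nlinarith)
      have hQv := mul_nonneg hQ (by linarith : (0:ℝ) ≤ 1 - v)
      have hprod : (-J₃ + -J₁) * (J₃ * u + J₂ * v + J₁ * w - (J₁ + J₂ + J₃)) ≥ 0 := by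
        linarith [K, hQv]
      nlinarith [hprod, hpos]
  · have h2 : J₂ ≤ 0 := by
      by_contra h2; push_neg at h2
      exact two_pos_absurd J₁ J₂ J₃ h1 h2 hS (by nlinarith)
    have h3 : J₃ ≤ 0 := by
      by_contra h3; push_neg at h3
      exact two_pos_absurd J₁ J₃ J₂ h1 h3 (by linarith) (by nlinarith)
    -- J₁ > 0
    have hpos : (0:ℝ) < -J₂ + -J₃ := by linarith
    have K := key_gram (-J₂) (-J₃) u v w hu1 hv1 hw1 hG
    have hQw := mul_nonneg hQ (by linarith : (0:ℝ) ≤ 1 - w)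
    have hprod : (-J₂ + -J₃) * (J₃ * u + J₂ * v + J₁ * w - (J₁ + J₂ + J₃)) ≥ 0 := by
      linarith [K, hQw]
    nlinarith [hprod, hpos]
end
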